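/- Let P ∈ C¹[0,∞) with P(0)=0, P' > 0, lim_{Z→∞}P(Z)/Z^{5/3} = P_∞ > 0, and 0 < (5/3)P(Z) − P'(Z)Z < cZ for all Z > 0, and let S be defined by S'(Z) = −(3/2)((5/3)P(Z) − P'(Z)Z)/Z² with S(Z) → 0 as Z → ∞. Define s(ϱ,ϑ) = S(ϱ/ϑ^{3/2}) + (4a/3)·ϑ³/ϱ for ϱ, ϑ > 0 with a > 0. Then there exists a constant C > 0 such that for all ϱ, ϑ > 0: ϱ·|s(ϱ,ϑ)| ≤ C·(ϑ³ + ϱ·|log ϱ| + ϱ·max(log ϑ, 0) + ϱ + 1). -/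
import Mathlib


theorem stmt_6 (P S : ℝ → ℝ) (a Pinf c : ℝ) (ha : 0 < a) (hPinf : 0 < Pinf) (hc : 0 < c)
    (hPC1 : ContDiff ℝ 1 P)
    (hP0 : P 0 = 0)
    (hP' : ∀ Z : ℝ, 0 ≤ Z → 0 < deriv P Z)
    (hPlim : Filter.Tendsto (fun Z : ℝ => P Z / Z ^ ((5:ℝ)/3)) Filter.atTop (nhds Pinf))
    (hcv : ∀ Z : ℝ, 0 < Z →
      0 < (5/3) * P Z - deriv P Z * Z ∧ (5/3) * P Z - deriv P Z * Z < c * Z)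
    (hS' : ∀ Z : ℝ, 0 < Z →
      HasDerivAt S (-(3/2) * ((5/3) * P Z - deriv P Z * Z) / Z ^ 2) Z)
    (hSlim : Filter.Tendsto S Filter.atTop (nhds 0))
    (s : ℝ → ℝ → ℝ)
    (hs : ∀ ϱ ϑ : ℝ, 0 < ϱ → 0 < ϑ →
      s ϱ ϑ = S (ϱ / ϑ ^ ((3:ℝ)/2)) + (4 * a / 3) * ϑ ^ 3 / ϱ) :
    ∃ C > 0, ∀ ϱ ϑ : ℝ, 0 < ϱ → 0 < ϑ →
      ϱ * |s ϱ ϑ| ≤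
        C * (ϑ ^ 3 + ϱ * |Real.log ϱ| + ϱ * max (Real.log ϑ) 0 + ϱ + 1) := by
  -- S is strictly decreasing on (0,∞)
  have hanti : StrictAntiOn S (Set.Ioi (0:ℝ)) := by
    apply strictAntiOn_of_deriv_neg (convex_Ioi 0)
    · exact fun z hz => ((hS' z hz).continuousAt).continuousWithinAt
    · intro z hz
      rw [interior_Ioi] at hz
      have hz' : (0:ℝ) < z := hz
      rw [(hS' z hz).deriv]
      have hA := (hcv z hz).1
      have h1 : 0 < (3/2) * ((5/3) * P z - deriv P z * z) / z ^ 2 := by positivity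
      have h2 : -(3/2) * ((5/3) * P z - deriv P z * z) / z ^ 2
          = -((3/2) * ((5/3) * P z - deriv P z * z) / z ^ 2) := by ring
      rw [h2]; linarith
  -- Antitone version
  have hantile : ∀ z w : ℝ, 0 < z → z ≤ w → S w ≤ S z := by
    intro z w hz hzw
    rcases eq_or_lt_of_le hzw with h | h
    · rw [h]
    · exact (hanti hz (lt_trans hz h) h).le
  -- S ≥ 0 on (0,∞)
  have hS0 : ∀ z : ℝ, 0 < z → 0 ≤ S z := by
    intro z hz
    refine le_of_tendsto hSlim ?_
    filter_upwards [Filter.eventually_ge_atTop z] with w hw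
    exact hantile z w hz hw
  -- g(z) = S z + (3/2) c log z is strictly increasing on (0,∞)
  have hmono : StrictMonoOn (fun z => S z + (3/2) * c * Real.log z) (Set.Ioi (0:ℝ)) := by
    apply strictMonoOn_of_deriv_pos (convex_Ioi 0)
    · intro z hz
      exact (((hS' z hz).add (((Real.hasDerivAt_log (ne_of_gt hz)).const_mul
        ((3:ℝ)/2 * c)))).continuousAt).continuousWithinAt
    · intro z hz
      rw [interior_Ioi] at hz
      have hz' : (0:ℝ) < z := hz
      have hg : HasDerivAt (fun z => S z + (3/2) * c * Real.log z)
          (-(3/2) * ((5/3) * P z - deriv P z * z) / z ^ 2 + (3/2 * c) * z⁻¹) z :=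
        (hS' z hz).add ((Real.hasDerivAt_log (ne_of_gt hz)).const_mul ((3:ℝ)/2 * c))
      rw [hg.deriv]
      have hA := (hcv z hz).1
      have hAc := (hcv z hz).2
      have key : (3/2) * ((5/3) * P z - deriv P z * z) / z ^ 2 < (3/2 * c) * z⁻¹ := by
        rw [div_lt_iff₀ (by positivity)]
        have : (3/2 * c) * z⁻¹ * z ^ 2 = 3/2 * (c * z) := by
          field_simp
        rw [this]; linarith
      have h2 : -(3/2) * ((5/3) * P z - deriv P z * z) / z ^ 2
          = -((3/2) * ((5/3) * P z - deriv P z * z) / z ^ 2) := by ring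
      rw [h2]; linarith
  -- key bound: S z ≤ S 1 + (3/2) c max(-log z, 0)
  have hSbd : ∀ z : ℝ, 0 < z → S z ≤ S 1 + (3/2) * c * max (-Real.log z) 0 := by
    intro z hz
    rcases le_or_gt 1 z with h1 | h1
    · have := hantile 1 z one_pos h1
      have hm : (0:ℝ) ≤ max (-Real.log z) 0 := le_max_right _ _
      nlinarith
    · have := (hmono (Set.mem_Ioi.mpr hz) (Set.mem_Ioi.mpr one_pos) h1).le
      simp only [Real.log_one, mul_zero, add_zero] at this
      have hm : -Real.log z ≤ max (-Real.log z) 0 := le_max_left _ _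
      nlinarith
  have hS1 : 0 ≤ S 1 := hS0 1 one_pos
  refine ⟨4 * a / 3 + S 1 + 9 * c / 4 + 3 * c / 2 + 1, by positivity, ?_⟩
  intro ϱ ϑ hϱ hϑ
  have ht : 0 < ϑ ^ ((3:ℝ)/2) := Real.rpow_pos_of_pos hϑ _
  set Z := ϱ / ϑ ^ ((3:ℝ)/2) with hZdef
  have hZ : 0 < Z := div_pos hϱ ht
  have hlogZ : Real.log Z = Real.log ϱ - (3/2) * Real.log ϑ := by
    rw [hZdef, Real.log_div (ne_of_gt hϱ) (ne_of_gt ht), Real.log_rpow hϑ]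
  -- bound on max(-log Z, 0)
  have hX : Real.log ϑ ≤ max (Real.log ϑ) 0 := le_max_left _ _
  have hX0 : (0:ℝ) ≤ max (Real.log ϑ) 0 := le_max_right _ _
  have hL : -Real.log ϱ ≤ |Real.log ϱ| := neg_le_abs _
  have hL0 : (0:ℝ) ≤ |Real.log ϱ| := abs_nonneg _
  have hM : max (-Real.log Z) 0 ≤ (3/2) * max (Real.log ϑ) 0 + |Real.log ϱ| := by
    apply max_le
    · rw [hlogZ]; linarith
    · linarith
  have hSZ := hSbd Z hZ
  have hSZ0 := hS0 Z hZ
  -- rewrite s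
  rw [hs ϱ ϑ hϱ hϑ]
  have hterm : 0 ≤ (4 * a / 3) * ϑ ^ 3 / ϱ := by positivity
  have habs : |S Z + (4 * a / 3) * ϑ ^ 3 / ϱ| = S Z + (4 * a / 3) * ϑ ^ 3 / ϱ :=
    abs_of_nonneg (by linarith)
  rw [habs]
  have hcancel : ϱ * (S Z + (4 * a / 3) * ϑ ^ 3 / ϱ) = ϱ * S Z + (4 * a / 3) * ϑ ^ 3 := by
    field_simp
  rw [hcancel]
  have h1 : ϱ * S Z ≤ ϱ * (S 1 + (3/2) * c * ((3/2) * max (Real.log ϑ) 0 + |Real.log ϱ|)) := by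
    apply mul_le_mul_of_nonneg_left _ hϱ.le
    calc S Z ≤ S 1 + (3/2) * c * max (-Real.log Z) 0 := hSZ
      _ ≤ S 1 + (3/2) * c * ((3/2) * max (Real.log ϑ) 0 + |Real.log ϱ|) := by
          have : (0:ℝ) < (3/2) * c := by positivity
          nlinarith
  have hϑ3 : (0:ℝ) < ϑ ^ 3 := by positivity
  nlinarith [mul_nonneg hϱ.le hX0, mul_nonneg hϱ.le hL0,
    mul_nonneg hS1 hϱ.le, mul_pos ha hϑ3, mul_pos hc hϱ]
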